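/- arXiv:1705.05023 — 3 statements merged into one kernel-verified Lean document; each statement's English description precedes it below -/
import Mathlib

section
/- If n is even and n ≥ 4, then χ'_a(K_n) ≥ n, i.e., the complete graph on an even number n ≥ 4 of vertices admits no acyclic edge-coloring with n−1 colors. -/
/-- A proper edge-coloring: edges sharing an endpoint get distinct colors. -/
def ProperEdgeColoring {V : Type*} (G : SimpleGraph V) (c : Sym2 V → ℕ) : Prop :=
  ∀ e₁ ∈ G.edgeSet, ∀ e₂ ∈ G.edgeSet, e₁ ≠ e₂ → (∃ v, v ∈ e₁ ∧ v ∈ e₂) → c e₁ ≠ c e₂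

/-- The subgraph consisting of edges colored `a` or `b`. -/
def twoColorSubgraph {V : Type*} (G : SimpleGraph V) (c : Sym2 V → ℕ) (a b : ℕ) :
    SimpleGraph V where
  Adj x y := G.Adj x y ∧ (c s(x, y) = a ∨ c s(x, y) = b)
  symm := by
    constructor
    intro x y h
    refine ⟨h.1.symm, ?_⟩
    rw [Sym2.eq_swap]
    exact h.2
  loopless := by
    constructor
    intro x h
    exact G.ne_of_adj h.1 rfl

/-- An acyclic edge-coloring: proper, and any two color classes induce an acyclic graph. -/
def AcyclicEdgeColoring {V : Type*} (G : SimpleGraph V) (c : Sym2 V → ℕ) : Prop :=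
  ProperEdgeColoring G c ∧ ∀ a b : ℕ, (twoColorSubgraph G c a b).IsAcyclic

/-- `G` has an acyclic edge-coloring using colors `0, …, k-1`. -/
def HasAcyclicEdgeColoring {V : Type*} (G : SimpleGraph V) (k : ℕ) : Prop :=
  ∃ c : Sym2 V → ℕ, AcyclicEdgeColoring G c ∧ ∀ e ∈ G.edgeSet, c e < k

/-
Every vertex of `K_n` has `n - 1` incident edges, all of distinct colours among `n - 1`, so
every colour occurs at every vertex. Hence in the subgraph of colours `0` and `1` every vertex
has two neighbours; but a finite acyclic graph has a vertex with at most one neighbour, namely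
the end of a longest path.
-/

namespace SimpleGraph

variable {V : Type*} {G : SimpleGraph V}

lemma IsAcyclic.exists_subsingleton_neighborSet [Finite V] [Nonempty V] (hG : G.IsAcyclic) :
    ∃ v, (G.neighborSet v).Subsingleton := by
  obtain ⟨u, v, p, hp, hlongest⟩ := Walk.exists_isPath_forall_isPath_length_le_length G
  have mem_support {w : V} (hw : G.Adj v w) : w ∈ p.support := by
    by_contra hnot
    have := hlongest u w _ (hp.concat hnot hw)
    simp only [Walk.length_concat] at this
    omega
  exact ⟨v, fun w₁ hw₁ w₂ hw₂ =>
    (hG.eq_penultimate_of_adj_end hp hw₁ (mem_support hw₁)).trans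
      (hG.eq_penultimate_of_adj_end hp hw₂ (mem_support hw₂)).symm⟩

end SimpleGraph

namespace ProperEdgeColoring

variable {V : Type*} {G : SimpleGraph V} {c : Sym2 V → ℕ}

lemma injOn_neighborSet (hc : ProperEdgeColoring G c) (v : V) :
    Set.InjOn (fun w => c s(v, w)) (G.neighborSet v) := by
  intro w₁ h₁ w₂ h₂ heq
  by_contra hne
  exact hc _ h₁ _ h₂ (Sym2.congr_right.not.2 hne)
    ⟨v, Sym2.mem_mk_left _ _, Sym2.mem_mk_left _ _⟩ heq

lemma exists_adj_color_eq (hc : ProperEdgeColoring G c) {v : V} [Fintype (G.neighborSet v)]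
    {k : ℕ} (hk : ∀ e ∈ G.edgeSet, c e < k) (hdeg : k ≤ G.degree v) {a : ℕ} (ha : a < k) :
    ∃ w, G.Adj v w ∧ c s(v, w) = a := by
  have hsurj : Set.SurjOn (fun w => c s(v, w)) (G.neighborFinset v) (Finset.range k) :=
    Finset.surjOn_of_injOn_of_card_le _
      (fun w hw => Finset.mem_range.2 (hk _ ((G.mem_neighborFinset v w).1 hw)))
      (by simpa using hc.injOn_neighborSet v) (by simpa using hdeg)
  obtain ⟨w, hw, rfl⟩ := hsurj (by simpa using ha)
  exact ⟨w, (G.mem_neighborFinset v w).1 hw, rfl⟩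

end ProperEdgeColoring

theorem complete_graph_acyclic_index_ge_general (n : ℕ) (hn : 4 ≤ n)
    (c : Sym2 (Fin n) → ℕ)
    (hc : AcyclicEdgeColoring (⊤ : SimpleGraph (Fin n)) c)
    (hk : ∀ e ∈ (⊤ : SimpleGraph (Fin n)).edgeSet, c e < n - 1) : False := by
  obtain ⟨hproper, hacyclic⟩ := hc
  have : Nonempty (Fin n) := ⟨⟨0, by omega⟩⟩
  obtain ⟨v, hv⟩ := (hacyclic 0 1).exists_subsingleton_neighborSet
  have hdeg : n - 1 ≤ (⊤ : SimpleGraph (Fin n)).degree v := by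
    simp [← SimpleGraph.completeGraph_eq_top, SimpleGraph.complete_graph_degree]
  obtain ⟨w₀, hadj₀, hc₀⟩ := hproper.exists_adj_color_eq hk hdeg (a := 0) (by omega)
  obtain ⟨w₁, hadj₁, hc₁⟩ := hproper.exists_adj_color_eq hk hdeg (a := 1) (by omega)
  have hw : w₀ = w₁ := hv (⟨hadj₀, .inl hc₀⟩ : (twoColorSubgraph ⊤ c 0 1).Adj v w₀)
    (⟨hadj₁, .inr hc₁⟩ : (twoColorSubgraph ⊤ c 0 1).Adj v w₁)
  subst hw
  omega

/-- For even `n ≥ 4`, the complete graph `K_n` has no acyclic edge-coloring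
with `n - 1` colors; that is, `χ'_a(K_n) ≥ n`. -/
theorem complete_graph_acyclic_index_ge (n : ℕ) (hn : 4 ≤ n) (heven : Even n)
    (c : Sym2 (Fin n) → ℕ)
    (hc : AcyclicEdgeColoring (⊤ : SimpleGraph (Fin n)) c)
    (hk : ∀ e ∈ (⊤ : SimpleGraph (Fin n)).edgeSet, c e < n - 1) : False :=
  complete_graph_acyclic_index_ge_general n hn c hc hk
end

section
/- Let q ≥ 100 be an integer and W a finite set with |W| ≥ q + √(5q). Suppose each element i ∈ W is assigned a set S_i ⊆ W with |S_i| ≥ |W| − q, and suppose a symmetric 'sees' relation holds: for all i ∈ S_1 and all j ∈ S_i, element j sees color i, where each element sees at most 4 colors in total (so the total number of (element, seen color) incidences is at most 4|W|). Then we reach a contradiction; i.e., there exist i ∈ S_1 and j ∈ S_i such that j does not see i. -/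
/-- The combinatorial core of Lemma 2: with `q ≥ 100`, `|W| ≥ q + √(5q)`, sets
`S i ⊆ W` of size at least `|W| - q`, and a "sees" relation `R ⊆ W × W` of size at
most `4|W|`, there exist `i ∈ S i₀` and `j ∈ S i` with `(j, i) ∉ R`. -/
theorem exists_unseen_pair {α : Type*} [DecidableEq α] (q : ℕ) (hq : 100 ≤ q)
    (W : Finset α) (hW : (q : ℝ) + Real.sqrt (5 * q) ≤ W.card)
    (i₀ : α) (hi₀ : i₀ ∈ W)
    (S : α → Finset α) (hS : ∀ i ∈ W, S i ⊆ W)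
    (hScard : ∀ i ∈ W, (W.card : ℤ) - q ≤ (S i).card)
    (R : Finset (α × α)) (hR : R ⊆ W ×ˢ W) (hRcard : R.card ≤ 4 * W.card) :
    ∃ i ∈ S i₀, ∃ j ∈ S i, (j, i) ∉ R := by
  by_contra h
  push_neg at h
  set n := W.card with hn
  have hs0 : (0:ℝ) ≤ Real.sqrt (5 * q) := Real.sqrt_nonneg _
  have hqn : q ≤ n := by
    have : (q:ℝ) ≤ n := by linarith
    exact_mod_cast this
  -- the set of forced pairs
  set P : Finset (α × α) := (S i₀).biUnion (fun i => (S i).image (fun j => (j, i))) with hP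
  have hPR : P ⊆ R := by
    intro p hp
    simp only [hP, Finset.mem_biUnion, Finset.mem_image] at hp
    obtain ⟨i, hi, j, hj, rfl⟩ := hp
    exact h i hi j hj
  have hcardP : P.card = ∑ i ∈ S i₀, (S i).card := by
    rw [hP, Finset.card_biUnion]
    · refine Finset.sum_congr rfl fun i _ => ?_
      rw [Finset.card_image_of_injective _ (fun a b hab => by simpa using congrArg Prod.fst hab)]
    · intro x hx y hy hxy
      simp only [Finset.disjoint_left, Finset.mem_image]
      rintro p ⟨j, hj, rfl⟩ ⟨j', hj', he⟩
      have := congrArg Prod.snd he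
      simp only at this
      exact hxy this.symm
  have hSlow : ∀ i ∈ W, n - q ≤ (S i).card := by
    intro i hi
    have := hScard i hi
    omega
  have hlow : (n - q) * (n - q) ≤ P.card := by
    rw [hcardP]
    calc (n - q) * (n - q) ≤ (S i₀).card * (n - q) := Nat.mul_le_mul_right _ (hSlow i₀ hi₀)
      _ = ∑ _i ∈ S i₀, (n - q) := by rw [Finset.sum_const, smul_eq_mul]
      _ ≤ ∑ i ∈ S i₀, (S i).card := by
          refine Finset.sum_le_sum fun i hi => hSlow i (hS i₀ hi₀ hi)
  have hkey : (n - q) * (n - q) ≤ 4 * n :=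
    le_trans hlow (le_trans (Finset.card_le_card hPR) hRcard)
  -- now the numeric contradiction, in ℝ
  have hcast : ((n - q : ℕ) : ℝ) = (n : ℝ) - q := by
    push_cast [hqn]; ring
  have hkeyR : ((n:ℝ) - q) * ((n:ℝ) - q) ≤ 4 * n := by
    rw [← hcast]; exact_mod_cast hkey
  have hsq : Real.sqrt (5 * q) * Real.sqrt (5 * q) = 5 * q := by
    rw [Real.mul_self_sqrt]; positivity
  have hqR : (100:ℝ) ≤ q := by exact_mod_cast hq
  nlinarith [sq_nonneg ((n:ℝ) - q - 20), sq_nonneg (Real.sqrt (5*q) - 20), hs0, hW, hkeyR, hsq, hqR]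
end

section
/- Let P be a graph that is a disjoint union of paths and cycles on vertex set {1,…,t} with t ≥ 11. Then there exists a subset O ⊆ {1,…,t} with |O| = ⌈(t+1)/2⌉ containing both 1 and t, such that at most two vertices of O have a neighbor (in P, possibly after adding one edge joining the endpoints of a path component) outside O, and if exactly two such vertices exist then each has at most one neighbor outside O. -/
/-!
Call `O = F ∪ S` good if `F` is closed under adjacency and `S` induces a connected subgraph.
A good set grows one vertex at a time: extend `S` along an edge leaving it, or, if there is none,
absorb `S` into `F` and restart `S` at a new vertex. Only vertices of `S` can have neighbours
outside `O`, and each such vertex has at most one neighbour inside `S`. As the subgraph induced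
by `S` is connected with maximum degree two, it has at least `|S| - 1` edges, so at most two of
its vertices have fewer than two neighbours in `S`. If two vertices do have neighbours outside
`O`, then `S` has at least two vertices, so each of them has a neighbour in `S` and hence at
most one outside `O`.

It remains to start from a good set of size at most `⌈(t+1)/2⌉` containing `1` and `t`: the
smaller of their components plus the other vertex if they are not connected, and otherwise a path
between them. If that path is too long, extend it maximally; the two ends then have all their
neighbours on the extension, so joining them by an edge keeps the maximum degree two, and going
round through the new edge is short.
-/

open Finset

namespace SimpleGraph

variable {V : Type*} {G : SimpleGraph V}

lemma Walk.IsPath.eq_snd_or_eq_end_of_adj_start [Finite V]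
    (hdeg : ∀ v, (G.neighborSet v).ncard ≤ 2) {a b u : V} {p : G.Walk a b} (hp : p.IsPath)
    (hu : u ∈ p.support) (hadj : G.Adj a u) : u = p.snd ∨ u = b := by
  obtain ⟨i, rfl, hi⟩ := Walk.mem_support_iff_exists_getVert.mp hu
  rcases Nat.lt_or_ge i 2 with hi2 | hi2
  · interval_cases i
    · exact absurd hadj (by rw [Walk.getVert_zero]; exact G.irrefl)
    · exact .inl rfl
  rcases hi.eq_or_lt with rfl | hlt
  · exact .inr p.getVert_length
  -- an interior vertex already has its two path neighbours, so `a` would be a third one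
  exfalso
  have hne : ∀ j k, j ≤ p.length → k ≤ p.length → j ≠ k → p.getVert j ≠ p.getVert k :=
    fun j k hj hk hjk h => hjk (hp.getVert_injOn hj hk h)
  have hsub : {p.getVert (i - 1), p.getVert (i + 1), p.getVert 0} ⊆
      G.neighborSet (p.getVert i) := by
    have hprev : G.Adj (p.getVert (i - 1)) (p.getVert i) := by
      simpa [Nat.sub_add_cancel (by omega : 1 ≤ i)] using p.adj_getVert_succ (i := i - 1) (by omega)
    rw [Walk.getVert_zero]
    intro z hz
    simp only [Set.mem_insert_iff, Set.mem_singleton_iff] at hz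
    rcases hz with rfl | rfl | rfl
    exacts [hprev.symm, p.adj_getVert_succ hlt, hadj.symm]
  have h3 := Set.ncard_le_ncard hsub (Set.toFinite _)
  rw [Set.ncard_eq_three.mpr ⟨_, _, _, hne _ _ (by omega) (by omega) (by omega),
    hne _ _ (by omega) (by omega) (by omega), hne _ _ (by omega) (by omega) (by omega), rfl⟩] at h3
  linarith [hdeg (p.getVert i)]

theorem Walk.IsPath.exists_maximal_extension [Fintype V] {a b : V} {q : G.Walk a b}
    (hq : q.IsPath) :
    ∃ (e₁ e₂ : V) (r₁ : G.Walk e₁ a) (r₂ : G.Walk b e₂),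
      (r₁.append (q.append r₂)).IsPath ∧
      (∀ u, G.Adj e₁ u → u ∈ (r₁.append (q.append r₂)).support) ∧
      (∀ u, G.Adj e₂ u → u ∈ (r₁.append (q.append r₂)).support) := by
  by_cases hstart : ∃ u, G.Adj a u ∧ u ∉ q.support
  · obtain ⟨u, hu, hnot⟩ := hstart
    obtain ⟨e₁, e₂, r₁, r₂, h⟩ := (hq.cons hnot (h := hu.symm)).exists_maximal_extension
    refine ⟨e₁, e₂, r₁.concat hu.symm, r₂, ?_⟩
    rwa [Walk.concat_append]
  by_cases hend : ∃ u, G.Adj b u ∧ u ∉ q.support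
  · obtain ⟨u, hu, hnot⟩ := hend
    obtain ⟨e₁, e₂, r₁, r₂, h⟩ := (hq.concat hnot hu).exists_maximal_extension
    refine ⟨e₁, e₂, r₁, Walk.cons hu r₂, ?_⟩
    rwa [← Walk.concat_append]
  push Not at hstart hend
  exact ⟨a, b, .nil, .nil, by simpa using hq, by simpa using hstart, by simpa using hend⟩
termination_by Fintype.card V - q.length
decreasing_by
  all_goals simp only [Walk.length_cons, Walk.length_concat]
  all_goals have := hq.length_lt; omega

lemma ncard_edgeSet_sup_edge_sdiff_le_one (s t : V) :
    ((G ⊔ edge s t).edgeSet \ G.edgeSet).ncard ≤ 1 := by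
  have hsub : (G ⊔ edge s t).edgeSet \ G.edgeSet ⊆ {s(s, t)} := by
    rw [edgeSet_sup, Set.union_sdiff_left]
    exact Set.sdiff_subset.trans edgeSet_edge_subset
  simpa using Set.ncard_le_ncard hsub

lemma ncard_neighborSet_sup_edge_left_le_two {s t s' : V} (hs : G.neighborSet s ⊆ {s', t}) :
    ((G ⊔ edge s t).neighborSet s).ncard ≤ 2 := by
  have hsub : (G ⊔ edge s t).neighborSet s ⊆ {s', t} := by
    rw [neighborSet_sup]
    refine Set.union_subset hs fun u hu => ?_
    rw [mem_neighborSet, edge_adj] at hu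
    grind
  exact (Set.ncard_le_ncard hsub).trans ((Set.ncard_insert_le _ _).trans (by simp))

lemma ncard_neighborSet_sup_edge_le_two {s t s' t' : V}
    (hdeg : ∀ v, (G.neighborSet v).ncard ≤ 2)
    (hs : G.neighborSet s ⊆ {s', t}) (ht : G.neighborSet t ⊆ {t', s}) (v : V) :
    ((G ⊔ edge s t).neighborSet v).ncard ≤ 2 := by
  by_cases hvs : v = s
  · subst hvs
    exact ncard_neighborSet_sup_edge_left_le_two hs
  by_cases hvt : v = t
  · subst hvt
    rw [edge_comm]
    exact ncard_neighborSet_sup_edge_left_le_two ht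
  have : (edge s t).neighborSet v = ∅ := by
    ext u
    simp [edge_adj, hvs, hvt]
  rw [neighborSet_sup, this, Set.union_empty]
  exact hdeg v

lemma exists_walk_sup_edge_length_le_one (s t : V) :
    ∃ w : (G ⊔ edge s t).Walk s t, w.length ≤ 1 := by
  by_cases h : s = t
  · subst h
    exact ⟨.nil, by simp⟩
  · have hadj : (G ⊔ edge s t).Adj s t := Or.inr (by simp [edge_adj, h])
    exact ⟨hadj.toWalk, by simp⟩

/-- `s` and `t` are the ends of a maximal path extending `p`; going round through the new edge
uses only vertices off `p`, besides `x` and `y`. -/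
theorem Walk.IsPath.exists_sup_edge_walk [Fintype V] (hdeg : ∀ v, (G.neighborSet v).ncard ≤ 2)
    {x y : V} {p : G.Walk x y} (hp : p.IsPath) :
    ∃ s t : V, (∀ v, ((G ⊔ edge s t).neighborSet v).ncard ≤ 2) ∧
      ∃ w : (G ⊔ edge s t).Walk x y, w.length + p.length ≤ Fintype.card V := by
  obtain ⟨e₁, e₂, r₁, r₂, hQ, h₁, h₂⟩ := hp.exists_maximal_extension
  have hs : G.neighborSet e₁ ⊆ {(r₁.append (p.append r₂)).snd, e₂} :=
    fun u hu => hQ.eq_snd_or_eq_end_of_adj_start hdeg (h₁ u hu) hu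
  have ht : G.neighborSet e₂ ⊆ {(r₁.append (p.append r₂)).reverse.snd, e₁} := fun u hu =>
    hQ.reverse.eq_snd_or_eq_end_of_adj_start hdeg
      (by rw [Walk.support_reverse, List.mem_reverse]; exact h₂ u hu) hu
  obtain ⟨c, hc⟩ := exists_walk_sup_edge_length_le_one (G := G) e₁ e₂
  refine ⟨e₁, e₂, ncard_neighborSet_sup_edge_le_two hdeg hs ht,
    (r₁.reverse.mapLe le_sup_left).append (c.append (r₂.reverse.mapLe le_sup_left)), ?_⟩
  have := hQ.length_lt
  simp only [Walk.length_append, Walk.length_mapLe, Walk.length_reverse] at this ⊢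
  omega

theorem Reachable.exists_sup_edge_walk_length_lt [Fintype V]
    (hdeg : ∀ v, (G.neighborSet v).ncard ≤ 2) {x y : V} (hxy : G.Reachable x y) {k : ℕ}
    (hk : Fintype.card V < 2 * k) :
    ∃ s t : V, (∀ v, ((G ⊔ edge s t).neighborSet v).ncard ≤ 2) ∧
      ∃ w : (G ⊔ edge s t).Walk x y, w.length < k := by
  obtain ⟨p, hp⟩ := hxy.exists_isPath
  by_cases hpk : p.length < k
  · exact ⟨x, x, by rwa [sup_edge_self], p.mapLe le_sup_left, by rwa [Walk.length_mapLe]⟩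
  obtain ⟨s, t, hdeg', w, hw⟩ := hp.exists_sup_edge_walk hdeg
  exact ⟨s, t, hdeg', w, by omega⟩

def IsClosedUnderAdj (G : SimpleGraph V) (s : Set V) : Prop :=
  ∀ ⦃v u⦄, v ∈ s → G.Adj v u → u ∈ s

lemma induce_singleton_connected (v : V) : (G.induce {v}).Connected :=
  have : Nonempty ({v} : Set V) := ⟨⟨v, rfl⟩⟩
  ⟨.of_subsingleton⟩

theorem exists_closedUnderAdj_union_connected_of_not_reachable [Fintype V] [DecidableEq V]
    {x y : V} (hxy : ¬G.Reachable x y) :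
    ∃ F S : Finset V, G.IsClosedUnderAdj F ∧ (G.induce S).Connected ∧
      x ∈ F ∪ S ∧ y ∈ F ∪ S ∧ 2 * #(F ∪ S) ≤ Fintype.card V + 2 := by
  classical
  wlog hle : #{v | G.Reachable x v} ≤ #{v | G.Reachable y v} generalizing x y
  · obtain ⟨F, S, hF, hS, hx, hy, hcard⟩ := this (fun h => hxy h.symm) (by omega)
    exact ⟨F, S, hF, hS, hy, hx, hcard⟩
  refine ⟨({v | G.Reachable x v} : Finset V), {y}, fun v u hv hadj => ?_,
    by rw [coe_singleton]; exact induce_singleton_connected y, by simp, by simp, ?_⟩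
  · simp only [coe_filter, mem_univ, true_and, Set.mem_ofPred_eq] at hv ⊢
    exact hv.trans hadj.reachable
  have hdisj : Disjoint ({v | G.Reachable x v} : Finset V) ({v | G.Reachable y v} : Finset V) :=
    disjoint_filter.mpr fun _ _ hx hy => hxy (hx.trans hy.symm)
  have := card_union_of_disjoint hdisj ▸ card_le_univ (_ ∪ _)
  have := card_union_le ({v | G.Reachable x v} : Finset V) {y}
  simp only [card_singleton] at this
  omega

theorem exists_sup_edge_closedUnderAdj_union_connected [Fintype V] [DecidableEq V]
    (hdeg : ∀ v, (G.neighborSet v).ncard ≤ 2) (x y : V) {k : ℕ}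
    (hk : Fintype.card V < 2 * k) :
    ∃ s t : V, (∀ v, ((G ⊔ edge s t).neighborSet v).ncard ≤ 2) ∧
      ∃ F S : Finset V, (G ⊔ edge s t).IsClosedUnderAdj F ∧ ((G ⊔ edge s t).induce S).Connected ∧
        x ∈ F ∪ S ∧ y ∈ F ∪ S ∧ #(F ∪ S) ≤ k := by
  by_cases hxy : G.Reachable x y
  · obtain ⟨s, t, hdeg', w, hw⟩ := hxy.exists_sup_edge_walk_length_lt hdeg hk
    refine ⟨s, t, hdeg', ∅, w.support.toFinset, fun _ _ h => absurd h (notMem_empty _),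
      by rw [List.coe_toFinset]; exact w.connected_induce_support, by simp, by simp, ?_⟩
    rw [empty_union]
    have := w.support.toFinset_card_le
    rw [Walk.length_support] at this
    omega
  obtain ⟨F, S, hF, hS, hx, hy, hcard⟩ := exists_closedUnderAdj_union_connected_of_not_reachable hxy
  exact ⟨x, x, by rwa [sup_edge_self], F, S, by rwa [sup_edge_self], by rwa [sup_edge_self],
    hx, hy, by omega⟩

theorem exists_closedUnderAdj_union_connected_card_eq [Fintype V] [DecidableEq V]
    {F S : Finset V} (hF : G.IsClosedUnderAdj F) (hS : (G.induce S).Connected) {m : ℕ}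
    (hm : #(F ∪ S) ≤ m) (hmV : m ≤ Fintype.card V) :
    ∃ F' S' : Finset V, G.IsClosedUnderAdj F' ∧ (G.induce S').Connected ∧
      F ∪ S ⊆ F' ∪ S' ∧ #(F' ∪ S') = m := by
  rcases hm.eq_or_lt with hm | hm
  · exact ⟨F, S, hF, hS, subset_rfl, hm⟩
  by_cases hgrow : ∃ v ∈ S, ∃ u ∉ F ∪ S, G.Adj v u
  · obtain ⟨v, hv, u, hu, hadj⟩ := hgrow
    have hS' : (G.induce ↑(insert u S)).Connected := by
      rw [coe_insert, Set.insert_eq, Set.union_comm]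
      exact connected_induce_union hS.preconnected .of_subsingleton hv rfl hadj
    have hcard : #(F ∪ insert u S) = #(F ∪ S) + 1 := by
      rw [union_insert, card_insert_of_notMem hu]
    obtain ⟨F', S', hF', hS'', hsub, hcard'⟩ :=
      exists_closedUnderAdj_union_connected_card_eq hF hS' (m := m) (by omega) hmV
    exact ⟨F', S', hF', hS'', (union_subset_union_right (subset_insert u S)).trans hsub, hcard'⟩
  · push Not at hgrow
    have hFS : G.IsClosedUnderAdj ↑(F ∪ S) := by
      intro v u hv hadj
      rw [coe_union] at hv ⊢
      rcases hv with hv | hv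
      · exact .inl (hF hv hadj)
      · by_contra hu
        exact hgrow v hv u (by simpa using hu) hadj
    obtain ⟨z, hz⟩ : ∃ z, z ∉ F ∪ S := by
      by_contra! h
      have := card_le_card (show univ ⊆ F ∪ S from fun v _ => h v)
      simp only [card_univ] at this
      omega
    have hcard : #(F ∪ S ∪ {z}) = #(F ∪ S) + 1 := by
      rw [union_singleton, card_insert_of_notMem hz]
    obtain ⟨F', S', hF', hS', hsub, hcard'⟩ := exists_closedUnderAdj_union_connected_card_eq hFS
      (by rw [coe_singleton]; exact induce_singleton_connected z) (m := m) (by omega) hmV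
    exact ⟨F', S', hF', hS', subset_union_left.trans hsub, hcard'⟩
termination_by m - #(F ∪ S)
decreasing_by all_goals omega

lemma ncard_neighborSet_eq_degree [Fintype V] [DecidableRel G.Adj] (v : V) :
    (G.neighborSet v).ncard = G.degree v := by
  simp [Set.ncard_eq_toFinset_card', ← card_neighborFinset_eq_degree, neighborFinset_eq_filter]

lemma Connected.ncard_setOf_ncard_neighborSet_le_one_le_two [Finite V] (hG : G.Connected)
    (hdeg : ∀ v, (G.neighborSet v).ncard ≤ 2) :
    {v | (G.neighborSet v).ncard ≤ 1}.ncard ≤ 2 := by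
  classical
  have := Fintype.ofFinite V
  simp only [ncard_neighborSet_eq_degree] at hdeg ⊢
  have hL : {v | G.degree v ≤ 1}.ncard = #{v | G.degree v ≤ 1} := by
    rw [← Set.ncard_coe_finset]
    simp
  have htree := hG.card_vert_le_card_edgeSet_add_one
  rw [Nat.card_eq_fintype_card, Nat.card_eq_fintype_card, ← edgeFinset_card] at htree
  have h1 : ∑ v with G.degree v ≤ 1, G.degree v ≤ #{v | G.degree v ≤ 1} := by
    simpa using sum_le_card_nsmul {v | G.degree v ≤ 1} (fun v => G.degree v) 1
      fun v hv => (mem_filter.mp hv).2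
  have h2 : ∑ v with ¬G.degree v ≤ 1, G.degree v ≤ #{v | ¬G.degree v ≤ 1} * 2 := by
    simpa using sum_le_card_nsmul {v | ¬G.degree v ≤ 1} (fun v => G.degree v) 2
      fun v _ => hdeg v
  have h3 := card_filter_add_card_filter_not (s := univ) fun v => G.degree v ≤ 1
  have h4 := sum_filter_add_sum_filter_not univ (fun v => G.degree v ≤ 1) (fun v => G.degree v)
  have := G.sum_degrees_eq_twice_card_edges
  rw [card_univ] at h3
  omega

lemma ncard_neighborSet_induce {s : Set V} (v : s) :
    ((G.induce s).neighborSet v).ncard = (G.neighborSet v ∩ s).ncard := by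
  rw [← Set.ncard_image_of_injective _ Subtype.val_injective]
  congr 1
  ext u
  simp [and_comm]

section Boundary

variable [Finite V] [DecidableEq V] {F S : Finset V}

lemma ncard_outside_add_ncard_neighborSet_induce_le_two
    (hdeg : ∀ v, (G.neighborSet v).ncard ≤ 2) (v : S) :
    {u | u ∉ F ∪ S ∧ G.Adj v u}.ncard + ((G.induce S).neighborSet v).ncard ≤ 2 := by
  have hsub : {u | u ∉ F ∪ S ∧ G.Adj v u} ⊆ G.neighborSet v \ S :=
    fun u ⟨hu, hadj⟩ => ⟨hadj, fun h => hu (mem_union_right F h)⟩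
  rw [ncard_neighborSet_induce]
  have := Set.ncard_inter_add_ncard_sdiff_eq_ncard (G.neighborSet v) S
  linarith [Set.ncard_le_ncard hsub, hdeg v]

lemma IsClosedUnderAdj.boundary_subset (hdeg : ∀ v, (G.neighborSet v).ncard ≤ 2)
    (hF : G.IsClosedUnderAdj F) :
    {v ∈ (↑(F ∪ S) : Set V) | ∃ u ∉ F ∪ S, G.Adj v u} ⊆
      Subtype.val '' {w : S | ((G.induce S).neighborSet w).ncard ≤ 1} := by
  rintro v ⟨hv, u, hu, hadj⟩
  have hvS : v ∈ S := (mem_union.mp hv).resolve_left fun hvF =>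
    hu (mem_union_left S (hF hvF hadj))
  refine ⟨⟨v, hvS⟩, ?_, rfl⟩
  have hout : 0 < {u | u ∉ F ∪ S ∧ G.Adj v u}.ncard :=
    (Set.ncard_pos (Set.toFinite _)).mpr ⟨u, hu, hadj⟩
  have : {u | u ∉ F ∪ S ∧ G.Adj v u}.ncard + ((G.induce S).neighborSet ⟨v, hvS⟩).ncard ≤ 2 :=
    ncard_outside_add_ncard_neighborSet_induce_le_two hdeg ⟨v, hvS⟩
  change ((G.induce S).neighborSet ⟨v, hvS⟩).ncard ≤ 1
  omega

theorem IsClosedUnderAdj.ncard_boundary_le_two (hdeg : ∀ v, (G.neighborSet v).ncard ≤ 2)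
    (hF : G.IsClosedUnderAdj F) (hS : (G.induce S).Connected) :
    {v ∈ (↑(F ∪ S) : Set V) | ∃ u ∉ F ∪ S, G.Adj v u}.ncard ≤ 2 := by
  have hdegS : ∀ w : S, ((G.induce S).neighborSet w).ncard ≤ 2 := fun w => by
    rw [ncard_neighborSet_induce]
    exact (Set.ncard_le_ncard Set.inter_subset_left).trans (hdeg w)
  calc _ ≤ _ := Set.ncard_le_ncard (hF.boundary_subset hdeg)
    _ = _ := Set.ncard_image_of_injective _ Subtype.val_injective
    _ ≤ 2 := hS.ncard_setOf_ncard_neighborSet_le_one_le_two hdegS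

theorem IsClosedUnderAdj.ncard_outside_le_one (hdeg : ∀ v, (G.neighborSet v).ncard ≤ 2)
    (hF : G.IsClosedUnderAdj F) (hS : (G.induce S).Connected)
    (h2 : {v ∈ (↑(F ∪ S) : Set V) | ∃ u ∉ F ∪ S, G.Adj v u}.ncard = 2) :
    ∀ v ∈ F ∪ S, {u | u ∉ F ∪ S ∧ G.Adj v u}.ncard ≤ 1 := by
  intro v hv
  rcases mem_union.mp hv with hvF | hvS
  · have : {u | u ∉ F ∪ S ∧ G.Adj v u} = ∅ :=
      Set.eq_empty_of_forall_notMem fun u ⟨hu, hadj⟩ => hu (mem_union_left S (hF hvF hadj))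
    rw [this, Set.ncard_empty]
    exact zero_le_one
  have hS2 : 2 ≤ #S := by
    have hsub := (hF.boundary_subset (S := S) hdeg).trans (Set.image_subset_range _ _)
    rw [Subtype.range_coe] at hsub
    simpa only [h2, Set.ncard_coe_finset] using Set.ncard_le_ncard hsub
  obtain ⟨w, hwS, hwv⟩ := exists_mem_ne hS2 v
  have hinner : 0 < ((G.induce S).neighborSet ⟨v, hvS⟩).ncard :=
    (Set.ncard_pos (Set.toFinite _)).mpr <|
      (hS.preconnected ⟨v, hvS⟩ ⟨w, hwS⟩).nonempty_neighborSet_left (by simpa using hwv.symm)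
  have : {u | u ∉ F ∪ S ∧ G.Adj v u}.ncard + ((G.induce S).neighborSet ⟨v, hvS⟩).ncard ≤ 2 :=
    ncard_outside_add_ncard_neighborSet_induce_le_two hdeg ⟨v, hvS⟩
  omega

end Boundary

end SimpleGraph

open SimpleGraph

/-- Structural claim about the conflict graph in Lemma 4: if `P` is a disjoint
union of paths and cycles (max degree ≤ 2) on `t ≥ 11` vertices, then there is a
set `O` of size `⌈(t+1)/2⌉` containing the first and last vertex such that, after
possibly adding one edge (keeping max degree ≤ 2, i.e. joining the endpoints of a
path component), at most two vertices of `O` have a neighbor outside `O`, and if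
exactly two then each has at most one neighbor outside `O`. -/
theorem conflict_graph_odd_set (t : ℕ) (ht : 11 ≤ t) (P : SimpleGraph (Fin t))
    (hdeg : ∀ v, (P.neighborSet v).ncard ≤ 2) :
    ∃ O : Finset (Fin t), O.card = (t + 2) / 2 ∧
      (⟨0, by omega⟩ : Fin t) ∈ O ∧ (⟨t - 1, by omega⟩ : Fin t) ∈ O ∧
      ∃ P' : SimpleGraph (Fin t), P ≤ P' ∧ (P'.edgeSet \ P.edgeSet).ncard ≤ 1 ∧
        (∀ v, (P'.neighborSet v).ncard ≤ 2) ∧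
        {v ∈ (O : Set (Fin t)) | ∃ u ∉ O, P'.Adj v u}.ncard ≤ 2 ∧
        ({v ∈ (O : Set (Fin t)) | ∃ u ∉ O, P'.Adj v u}.ncard = 2 →
          ∀ v ∈ O, {u : Fin t | u ∉ O ∧ P'.Adj v u}.ncard ≤ 1) := by
  obtain ⟨s, s', hdeg', F, S, hF, hS, hx, hy, hcard⟩ :=
    exists_sup_edge_closedUnderAdj_union_connected hdeg (⟨0, by omega⟩ : Fin t) ⟨t - 1, by omega⟩
      (k := (t + 2) / 2) (by rw [Fintype.card_fin]; omega)
  obtain ⟨F', S', hF', hS', hsub, hcard'⟩ :=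
    exists_closedUnderAdj_union_connected_card_eq hF hS hcard (by rw [Fintype.card_fin]; omega)
  exact ⟨F' ∪ S', hcard', hsub hx, hsub hy, P ⊔ edge s s', le_sup_left,
    ncard_edgeSet_sup_edge_sdiff_le_one s s', hdeg', hF'.ncard_boundary_le_two hdeg' hS',
    hF'.ncard_outside_le_one hdeg' hS'⟩
end
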